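/- arXiv:1701.04890 — 7 statements merged into one kernel-verified Lean document; each statement's English description precedes it below -/
import Mathlib

section
/- Let X, S : Polynomial ℂ with X ≠ 0 and X.coeff 0 ≠ 0. If S is self-reciprocal with respect to natDegree S and S divides X, then S also divides X⋆[natDegree X]. (Every self-reciprocal factor of X is a common factor of X and its conjugate-reciprocal.) -/
/-- The conjugate-reciprocal of `P` with respect to `N`:
its `k`-th coefficient is `conj (P.coeff (N - k))` for `k ≤ N`. -/
noncomputable def creflect (N : ℕ) (P : Polynomial ℂ) : Polynomial ℂ :=
  Polynomial.reflect N (P.map (starRingEnd ℂ))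

open Polynomial in
theorem creflect_mul {P Q : ℂ[X]} {M N : ℕ} (hP : P.natDegree ≤ M) (hQ : Q.natDegree ≤ N) :
    creflect (M + N) (P * Q) = creflect M P * creflect N Q := by
  rw [creflect, Polynomial.map_mul,
    reflect_mul _ _ (natDegree_map_le.trans hP) (natDegree_map_le.trans hQ), ← creflect, ← creflect]

theorem selfReciprocal_factor_dvd_creflect_general (X S : Polynomial ℂ)
    (hX : X ≠ 0)
    (hS : creflect S.natDegree S = S) (hdvd : S ∣ X) :
    S ∣ creflect X.natDegree X := by
  obtain ⟨Q, rfl⟩ := hdvd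
  obtain ⟨hS0, hQ0⟩ := mul_ne_zero_iff.mp hX
  refine ⟨creflect Q.natDegree Q, ?_⟩
  rw [Polynomial.natDegree_mul hS0 hQ0, creflect_mul le_rfl le_rfl, hS]

/-- Every self-reciprocal factor of `X` is a common factor of `X` and its
conjugate-reciprocal. -/
theorem selfReciprocal_factor_dvd_creflect (X S : Polynomial ℂ)
    (hX : X ≠ 0) (h0 : X.coeff 0 ≠ 0)
    (hS : creflect S.natDegree S = S) (hdvd : S ∣ X) :
    S ∣ creflect X.natDegree X :=
  selfReciprocal_factor_dvd_creflect_general X S hX hS hdvd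
end

section
/- Let G₁, G₂ : Polynomial ℂ be nonzero polynomials with natDegree G₁ = D₁, natDegree G₂ = D₂, G₁⋆[D₁] = G₁, G₂⋆[D₂] = G₂, and IsCoprime G₁ G₂. If S₁, S₂ : Polynomial ℂ satisfy natDegree S₁ ≤ D₁, natDegree S₂ ≤ D₂, S₁⋆[D₁] = S₁, S₂⋆[D₂] = S₂, and G₁ * S₂ = G₂ * S₁, then there exists a real number c such that S₁ = (c : ℂ) • G₁ and S₂ = (c : ℂ) • G₂. -/
namespace Polynomial

theorem exists_eq_C_mul_of_dvd_of_natDegree_le {R : Type*} [CommRing R] [NoZeroDivisors R]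
    {p q : R[X]} (hp : p ≠ 0) (hpq : p ∣ q) (hdeg : q.natDegree ≤ p.natDegree) :
    ∃ a : R, q = C a * p := by
  obtain ⟨r, rfl⟩ := hpq
  rcases eq_or_ne r 0 with rfl | hr
  · exact ⟨0, by simp⟩
  have hr_deg : r.natDegree = 0 := by
    rw [natDegree_mul hp hr] at hdeg
    omega
  exact ⟨r.coeff 0, by rw [mul_comm, ← eq_C_of_natDegree_eq_zero hr_deg]⟩

end Polynomial

open Polynomial

theorem creflect_C_mul (N : ℕ) (a : ℂ) (P : ℂ[X]) :
    creflect N (C a * P) = C (starRingEnd ℂ a) * creflect N P := by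
  simp [creflect, reflect_C_mul]

theorem exists_real_of_creflect_C_mul_eq {N : ℕ} {G : ℂ[X]} (hG : G ≠ 0)
    (hsr : creflect N G = G) {a : ℂ} (ha : creflect N (C a * G) = C a * G) :
    ∃ r : ℝ, a = r := by
  rw [creflect_C_mul, hsr] at ha
  exact Complex.conj_eq_iff_real.mp (C_injective (mul_right_cancel₀ hG ha))

theorem coprime_selfReciprocal_cross_eq_general (G₁ G₂ : Polynomial ℂ) (D₁ : ℕ)
    (hG₁ : G₁ ≠ 0)
    (hD₁ : G₁.natDegree = D₁)
    (hsr₁ : creflect D₁ G₁ = G₁)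
    (hcop : IsCoprime G₁ G₂)
    (S₁ S₂ : Polynomial ℂ)
    (hS₁ : S₁.natDegree ≤ D₁)
    (hsrS₁ : creflect D₁ S₁ = S₁)
    (heq : G₁ * S₂ = G₂ * S₁) :
    ∃ c : ℝ, S₁ = (c : ℂ) • G₁ ∧ S₂ = (c : ℂ) • G₂ := by
  subst hD₁
  obtain ⟨a, hS₁a⟩ := exists_eq_C_mul_of_dvd_of_natDegree_le hG₁
    (hcop.dvd_of_dvd_mul_left ⟨S₂, heq.symm⟩) hS₁
  have hS₂a : S₂ = C a * G₂ := mul_left_cancel₀ hG₁ (by rw [heq, hS₁a]; ring)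
  obtain ⟨c, rfl⟩ := exists_real_of_creflect_C_mul_eq hG₁ hsr₁ (hS₁a ▸ hsrS₁)
  exact ⟨c, by rw [hS₁a, smul_eq_C_mul], by rw [hS₂a, smul_eq_C_mul]⟩

/-- For coprime self-reciprocal `G₁, G₂`, self-reciprocal solutions of
`G₁ S₂ = G₂ S₁` are real multiples of `G₁, G₂`. -/
theorem coprime_selfReciprocal_cross_eq (G₁ G₂ : Polynomial ℂ) (D₁ D₂ : ℕ)
    (hG₁ : G₁ ≠ 0) (hG₂ : G₂ ≠ 0)
    (hD₁ : G₁.natDegree = D₁) (hD₂ : G₂.natDegree = D₂)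
    (hsr₁ : creflect D₁ G₁ = G₁) (hsr₂ : creflect D₂ G₂ = G₂)
    (hcop : IsCoprime G₁ G₂)
    (S₁ S₂ : Polynomial ℂ)
    (hS₁ : S₁.natDegree ≤ D₁) (hS₂ : S₂.natDegree ≤ D₂)
    (hsrS₁ : creflect D₁ S₁ = S₁) (hsrS₂ : creflect D₂ S₂ = S₂)
    (heq : G₁ * S₂ = G₂ * S₁) :
    ∃ c : ℝ, S₁ = (c : ℂ) • G₁ ∧ S₂ = (c : ℂ) • G₂ :=
  coprime_selfReciprocal_cross_eq_general G₁ G₂ D₁ hG₁ hD₁ hsr₁ hcop S₁ S₂ hS₁ hsrS₁ heq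
end

section
/- Let L₁, L₂ ≥ 1, let x₁ : Fin L₁ → ℂ with x₁ 0 ≠ 0 and x₁ (L₁ - 1) ≠ 0, and x₂ : Fin L₂ → ℂ with x₂ 0 ≠ 0 and x₂ (L₂ - 1) ≠ 0. Let X₁ := Σ_{l < L₁} C (x₁ l) * X^l and X₂ := Σ_{l < L₂} C (x₂ l) * X^l in Polynomial ℂ, and assume IsCoprime X₁ X₂. Let ι := Fin L₁ ⊕ Fin L₂ and x : ι → ℂ be Sum.elim x₁ x₂. Suppose M : Matrix ι ι ℂ is positive semidefinite (Matrix.PosSemidef M) and its block diagonal sums agree with those of the outer product of x, i.e., for every pair (i, j) ∈ {1,2} × {1,2} and every integer s, the sum of M (ιᵢ a) (ιⱼ b) over all a : Fin Lᵢ and b : Fin Lⱼ with (a : ℤ) - (b : ℤ) = s equals the sum of xᵢ a * conj (xⱼ b) over the same index set (here ι₁ = Sum.inl, ι₂ = Sum.inr). Then M = Matrix.vecMulVec x (fun v => conj (x v)), i.e., M u v = x u * conj (x v) for all u, v : ι. -/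
open scoped ComplexOrder
open Polynomial

private noncomputable def circAux (z : ℂ) (s : ℤ) : ℂ :=
  if 0 ≤ s then z ^ s.toNat else (starRingEnd ℂ z) ^ (-s).toNat

private lemma pow_conjAux (z : ℂ) (hz : z * starRingEnd ℂ z = 1) (a b : ℕ) :
    z ^ a * (starRingEnd ℂ z) ^ b = circAux z ((a:ℤ) - b) := by
  unfold circAux
  rcases le_or_gt b a with h | h
  · rw [if_pos (by omega), show ((a:ℤ) - b).toNat = a - b by omega,
      ← pow_sub_mul_pow z h, mul_assoc, ← mul_pow, hz, one_pow, mul_one]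
  · rw [if_neg (by omega), show (-((a:ℤ) - b)).toNat = b - a by omega,
      ← pow_sub_mul_pow (starRingEnd ℂ z) h.le, ← mul_assoc, mul_comm (z ^ a),
      mul_assoc, ← mul_pow, hz, one_pow, mul_one]

private lemma diff_sumAux {n m : ℕ} (f : Fin n → Fin m → ℂ) (c : ℤ → ℂ) :
    ∑ a : Fin n, ∑ b : Fin m, f a b * c ((a:ℤ) - (b:ℤ)) =
    ∑ s ∈ Finset.Icc (-(m:ℤ)) (n:ℤ), (∑ a : Fin n, ∑ b : Fin m,
      (if ((a:ℕ):ℤ) - ((b:ℕ):ℤ) = s then f a b else 0)) * c s := by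
  have key : ∀ (a : Fin n) (b : Fin m), f a b * c ((a:ℤ) - (b:ℤ)) =
      ∑ s ∈ Finset.Icc (-(m:ℤ)) (n:ℤ),
        (if ((a:ℕ):ℤ) - ((b:ℕ):ℤ) = s then f a b else 0) * c s := by
    intro a b
    have h1 : ∀ s ∈ Finset.Icc (-(m:ℤ)) (n:ℤ),
        (if ((a:ℕ):ℤ) - ((b:ℕ):ℤ) = s then f a b else 0) * c s =
        (if ((a:ℕ):ℤ) - ((b:ℕ):ℤ) = s then f a b * c s else 0) := by
      intro s _; split <;> simp
    rw [Finset.sum_congr rfl h1,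
      Finset.sum_ite_eq (Finset.Icc (-(m:ℤ)) (n:ℤ)) ((a:ℤ) - (b:ℤ)) (fun s => f a b * c s),
      if_pos]
    simp only [Finset.mem_Icc]
    have := a.isLt; have := b.isLt
    omega
  simp_rw [key, Finset.sum_mul]
  refine Eq.trans ?_ (Finset.sum_comm)
  exact Finset.sum_congr rfl fun a _ => Finset.sum_comm

private lemma diff_sum_eqAux {n m : ℕ} (f g : Fin n → Fin m → ℂ) (c : ℤ → ℂ)
    (h : ∀ s : ℤ, (∑ a : Fin n, ∑ b : Fin m, (if ((a:ℕ):ℤ) - ((b:ℕ):ℤ) = s then f a b else 0)) =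
      ∑ a : Fin n, ∑ b : Fin m, (if ((a:ℕ):ℤ) - ((b:ℕ):ℤ) = s then g a b else 0)) :
    ∑ a : Fin n, ∑ b : Fin m, f a b * c ((a:ℤ) - (b:ℤ)) =
    ∑ a : Fin n, ∑ b : Fin m, g a b * c ((a:ℤ) - (b:ℤ)) := by
  rw [diff_sumAux, diff_sumAux]
  exact Finset.sum_congr rfl fun s _ => by rw [h s]

private lemma ztrans_evalAux {n : ℕ} (f : Fin n → ℂ) (z : ℂ) :
    (∑ l : Fin n, C (f l) * X ^ (l:ℕ)).eval z = ∑ l : Fin n, f l * z ^ (l:ℕ) := by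
  simp [Polynomial.eval_finset_sum]

private lemma ztrans_coeffAux {n : ℕ} (f : Fin n → ℂ) (k : ℕ) :
    (∑ l : Fin n, C (f l) * X ^ (l:ℕ)).coeff k = if h : k < n then f ⟨k, h⟩ else 0 := by
  rw [Polynomial.finset_sum_coeff]
  simp_rw [Polynomial.coeff_C_mul, Polynomial.coeff_X_pow, mul_ite, mul_one, mul_zero]
  split
  · next h =>
    rw [Finset.sum_eq_single (⟨k, h⟩ : Fin n)]
    · simp
    · intro l _ hl
      rw [if_neg]
      exact fun hkl => hl (by simp [Fin.ext_iff, ← hkl])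
    · simp
  · next h =>
    exact Finset.sum_eq_zero fun l _ => if_neg fun hkl => h (by rw [hkl]; exact l.isLt)

private lemma ztrans_natDegreeAux {n : ℕ} (hn : 1 ≤ n) (f : Fin n → ℂ) :
    (∑ l : Fin n, C (f l) * X ^ (l:ℕ)).natDegree ≤ n - 1 := by
  rw [Polynomial.natDegree_le_iff_coeff_eq_zero]
  intro m hm
  rw [ztrans_coeffAux, dif_neg (by omega)]

private lemma circle_vanishAux (p : ℂ[X]) (h : ∀ z : ℂ, ‖z‖ = 1 → p.eval z = 0) : p = 0 := by
  apply Polynomial.eq_zero_of_infinite_isRoot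
  have hsub : (fun t : ℝ => Complex.exp (t * Complex.I)) '' Set.Ioo 0 1 ⊆ {x | p.IsRoot x} := by
    rintro z ⟨t, ht, rfl⟩
    exact h _ (by simp [Complex.norm_exp])
  refine Set.Infinite.mono hsub ?_
  apply Set.Infinite.image ?_ (Set.Ioo_infinite (by norm_num))
  intro t ht s hs he
  rw [Complex.exp_eq_exp_iff_exists_int] at he
  obtain ⟨n, hn⟩ := he
  have him := congrArg Complex.im hn
  simp [Complex.mul_im] at him
  have hpi := Real.pi_gt_three
  simp only [Set.mem_Ioo] at ht hs
  rcases lt_trichotomy n 0 with h0 | h0 | h0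
  · have h1 : n ≤ -1 := by omega
    have : (n:ℝ) ≤ -1 := by exact_mod_cast h1
    nlinarith
  · simp [h0] at him; linarith
  · have : (1:ℝ) ≤ n := by exact_mod_cast h0
    nlinarith

private lemma dvd_same_degAux {p q : ℂ[X]} (hp : p ≠ 0) (hd : p ∣ q)
    (hdeg : q.natDegree ≤ p.natDegree) : ∃ c : ℂ, q = C c * p := by
  obtain ⟨r, rfl⟩ := hd
  rcases eq_or_ne r 0 with rfl | hr
  · exact ⟨0, by simp⟩
  · have hnd := Polynomial.natDegree_mul hp hr
    have hr0 : r.natDegree = 0 := by omega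
    refine ⟨r.coeff 0, ?_⟩
    rw [Polynomial.eq_C_of_natDegree_eq_zero hr0]
    simp [mul_comm]

open scoped Matrix in
/-- Deterministic uniqueness of the feasible SDP: a positive-semidefinite matrix
whose block correlation measurements agree with those of `x x*` equals `x x*`,
provided the two z-transforms are coprime. -/
theorem sdp_block_correlation_uniqueness (L₁ L₂ : ℕ) (hL₁ : 1 ≤ L₁) (hL₂ : 1 ≤ L₂)
    (x₁ : Fin L₁ → ℂ) (x₂ : Fin L₂ → ℂ)
    (hx₁0 : x₁ ⟨0, hL₁⟩ ≠ 0) (hx₁l : x₁ ⟨L₁ - 1, by omega⟩ ≠ 0)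
    (hx₂0 : x₂ ⟨0, hL₂⟩ ≠ 0) (hx₂l : x₂ ⟨L₂ - 1, by omega⟩ ≠ 0)
    (hcop : IsCoprime (∑ l : Fin L₁, Polynomial.C (x₁ l) * Polynomial.X ^ (l : ℕ))
                      (∑ l : Fin L₂, Polynomial.C (x₂ l) * Polynomial.X ^ (l : ℕ)))
    (M : Matrix (Fin L₁ ⊕ Fin L₂) (Fin L₁ ⊕ Fin L₂) ℂ)
    (hM : M.PosSemidef)
    (h11 : ∀ s : ℤ,
      (∑ a : Fin L₁, ∑ b : Fin L₁,
        (if ((a : ℕ) : ℤ) - ((b : ℕ) : ℤ) = s then M (Sum.inl a) (Sum.inl b) else 0)) =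
      ∑ a : Fin L₁, ∑ b : Fin L₁,
        (if ((a : ℕ) : ℤ) - ((b : ℕ) : ℤ) = s then x₁ a * (starRingEnd ℂ) (x₁ b) else 0))
    (h22 : ∀ s : ℤ,
      (∑ a : Fin L₂, ∑ b : Fin L₂,
        (if ((a : ℕ) : ℤ) - ((b : ℕ) : ℤ) = s then M (Sum.inr a) (Sum.inr b) else 0)) =
      ∑ a : Fin L₂, ∑ b : Fin L₂,
        (if ((a : ℕ) : ℤ) - ((b : ℕ) : ℤ) = s then x₂ a * (starRingEnd ℂ) (x₂ b) else 0))
    (h12 : ∀ s : ℤ,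
      (∑ a : Fin L₁, ∑ b : Fin L₂,
        (if ((a : ℕ) : ℤ) - ((b : ℕ) : ℤ) = s then M (Sum.inl a) (Sum.inr b) else 0)) =
      ∑ a : Fin L₁, ∑ b : Fin L₂,
        (if ((a : ℕ) : ℤ) - ((b : ℕ) : ℤ) = s then x₁ a * (starRingEnd ℂ) (x₂ b) else 0))
    (h21 : ∀ s : ℤ,
      (∑ a : Fin L₂, ∑ b : Fin L₁,
        (if ((a : ℕ) : ℤ) - ((b : ℕ) : ℤ) = s then M (Sum.inr a) (Sum.inl b) else 0)) =
      ∑ a : Fin L₂, ∑ b : Fin L₁,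
        (if ((a : ℕ) : ℤ) - ((b : ℕ) : ℤ) = s then x₂ a * (starRingEnd ℂ) (x₁ b) else 0)) :
    M = Matrix.vecMulVec (Sum.elim x₁ x₂)
          (fun v => (starRingEnd ℂ) (Sum.elim x₁ x₂ v)) := by
  classical
  set x : Fin L₁ ⊕ Fin L₂ → ℂ := Sum.elim x₁ x₂ with hxdef
  set P₁ : Polynomial ℂ := ∑ l : Fin L₁, Polynomial.C (x₁ l) * Polynomial.X ^ (l : ℕ) with hP₁
  set P₂ : Polynomial ℂ := ∑ l : Fin L₂, Polynomial.C (x₂ l) * Polynomial.X ^ (l : ℕ) with hP₂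
  have hcoe1 : P₁.coeff (L₁ - 1) = x₁ ⟨L₁ - 1, by omega⟩ := by
    rw [hP₁, ztrans_coeffAux, dif_pos (by omega)]
  have hP₁ne : P₁ ≠ 0 := fun h0 => hx₁l (by rw [← hcoe1, h0, Polynomial.coeff_zero])
  have hP₁deg : P₁.natDegree = L₁ - 1 := by
    refine le_antisymm (by rw [hP₁]; exact ztrans_natDegreeAux hL₁ x₁) ?_
    exact Polynomial.le_natDegree_of_ne_zero (by rw [hcoe1]; exact hx₁l)
  set w : ℂ → (Fin L₁ ⊕ Fin L₂) → ℂ := fun z => Sum.elim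
      (fun a : Fin L₁ => P₂.eval z * z ^ (a : ℕ))
      (fun b : Fin L₂ => -(P₁.eval z) * z ^ (b : ℕ)) with hwdef
  have hcirc : ∀ z : ℂ, ‖z‖ = 1 → z * starRingEnd ℂ z = 1 := by
    intro z hz
    have h1 : ‖z‖ = 1 := hz
    rw [Complex.mul_conj]
    norm_cast
    rw [Complex.normSq_eq_norm_sq, h1, one_pow]
  -- Step 1: the vectors star (w z) are in the kernel of M for z on the unit circle
  have hker : ∀ z : ℂ, ‖z‖ = 1 → M *ᵥ (star (w z)) = 0 := by
    intro z hz
    have hz1 := hcirc z hz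
    rw [← hM.dotProduct_mulVec_zero_iff, star_star]
    have expand : ∀ N : Matrix (Fin L₁ ⊕ Fin L₂) (Fin L₁ ⊕ Fin L₂) ℂ,
        w z ⬝ᵥ (N *ᵥ star (w z)) =
          ((∑ a : Fin L₁, ∑ b : Fin L₁, N (Sum.inl a) (Sum.inl b) *
            ((P₂.eval z * starRingEnd ℂ (P₂.eval z)) * circAux z (((a : ℕ) : ℤ) - ((b : ℕ) : ℤ))))
        + (∑ a : Fin L₂, ∑ b : Fin L₁, N (Sum.inr a) (Sum.inl b) *
            ((-(P₁.eval z * starRingEnd ℂ (P₂.eval z))) * circAux z (((a : ℕ) : ℤ) - ((b : ℕ) : ℤ)))))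
        + ((∑ a : Fin L₁, ∑ b : Fin L₂, N (Sum.inl a) (Sum.inr b) *
            ((-(P₂.eval z * starRingEnd ℂ (P₁.eval z))) * circAux z (((a : ℕ) : ℤ) - ((b : ℕ) : ℤ))))
        + (∑ a : Fin L₂, ∑ b : Fin L₂, N (Sum.inr a) (Sum.inr b) *
            ((P₁.eval z * starRingEnd ℂ (P₁.eval z)) * circAux z (((a : ℕ) : ℤ) - ((b : ℕ) : ℤ))))) := by
      intro N
      simp only [dotProduct, Matrix.mulVec, Fintype.sum_sum_type, hwdef, Sum.elim_inl,
        Sum.elim_inr, Pi.star_apply, Complex.star_def, map_mul, map_pow, map_neg, mul_add,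
        Finset.mul_sum, Finset.sum_add_distrib]
      congr 1 <;> congr 1 <;>
      · refine Finset.sum_congr rfl fun a _ => Finset.sum_congr rfl fun b _ => ?_
        rw [← pow_conjAux z hz1]
        ring
    have hfact : ∀ {n m : ℕ} (f : Fin n → ℂ) (g : Fin m → ℂ) (K : ℂ),
        (∑ a : Fin n, ∑ b : Fin m, (f a * starRingEnd ℂ (g b)) *
            (K * circAux z (((a : ℕ) : ℤ) - ((b : ℕ) : ℤ)))) =
        K * ((∑ a : Fin n, f a * z ^ (a : ℕ)) *
            starRingEnd ℂ (∑ b : Fin m, g b * z ^ (b : ℕ))) := by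
      intro n m f g K
      have hpt : ∀ (a : Fin n) (b : Fin m),
          (f a * starRingEnd ℂ (g b)) * (K * circAux z (((a : ℕ) : ℤ) - ((b : ℕ) : ℤ)))
          = K * ((f a * z ^ (a : ℕ)) * (starRingEnd ℂ (g b) * (starRingEnd ℂ z) ^ (b : ℕ))) := by
        intro a b; rw [← pow_conjAux z hz1]; ring
      simp_rw [hpt, ← Finset.mul_sum]
      congr 1
      rw [map_sum]
      simp_rw [map_mul, map_pow]
      rw [Finset.sum_mul]
    rw [expand M]
    have e11 := diff_sum_eqAux (fun a b => M (Sum.inl a) (Sum.inl b))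
      (fun a b => x₁ a * starRingEnd ℂ (x₁ b))
      (fun s => (P₂.eval z * starRingEnd ℂ (P₂.eval z)) * circAux z s) h11
    have e12 := diff_sum_eqAux (fun a b => M (Sum.inl a) (Sum.inr b))
      (fun a b => x₁ a * starRingEnd ℂ (x₂ b))
      (fun s => (-(P₂.eval z * starRingEnd ℂ (P₁.eval z))) * circAux z s) h12
    have e21 := diff_sum_eqAux (fun a b => M (Sum.inr a) (Sum.inl b))
      (fun a b => x₂ a * starRingEnd ℂ (x₁ b))
      (fun s => (-(P₁.eval z * starRingEnd ℂ (P₂.eval z))) * circAux z s) h21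
    have e22 := diff_sum_eqAux (fun a b => M (Sum.inr a) (Sum.inr b))
      (fun a b => x₂ a * starRingEnd ℂ (x₂ b))
      (fun s => (P₁.eval z * starRingEnd ℂ (P₁.eval z)) * circAux z s) h22
    rw [e11, e12, e21, e22, hfact x₁ x₁ _, hfact x₁ x₂ _, hfact x₂ x₁ _, hfact x₂ x₂ _,
      ← ztrans_evalAux x₁ z, ← ztrans_evalAux x₂ z, ← hP₁, ← hP₂]
    ring
  -- Step 2: each column of M - x x* is proportional to x
  have hDcol : ∀ u : Fin L₁ ⊕ Fin L₂, ∃ c : ℂ,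
      (∀ a : Fin L₁, M (Sum.inl a) u - x (Sum.inl a) * starRingEnd ℂ (x u) = c * x₁ a) ∧
      (∀ b : Fin L₂, M (Sum.inr b) u - x (Sum.inr b) * starRingEnd ℂ (x u) = c * x₂ b) := by
    intro u
    set pu : Polynomial ℂ := ∑ a : Fin L₁,
      Polynomial.C (M (Sum.inl a) u - x (Sum.inl a) * starRingEnd ℂ (x u)) *
        Polynomial.X ^ (a : ℕ) with hpu
    set qu : Polynomial ℂ := ∑ b : Fin L₂,
      Polynomial.C (M (Sum.inr b) u - x (Sum.inr b) * starRingEnd ℂ (x u)) *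
        Polynomial.X ^ (b : ℕ) with hqu
    have hpoly : P₂ * pu = P₁ * qu := by
      have hvan : P₂ * pu - P₁ * qu = 0 := by
        apply circle_vanishAux
        intro z hz
        have hku := congrFun (hker z hz) u
        simp only [Matrix.mulVec, dotProduct, Pi.star_apply, Complex.star_def,
          Pi.zero_apply] at hku
        have hrow : ∑ u', M u' u * (w z u') = 0 := by
          have h1 := congrArg (starRingEnd ℂ) hku
          simp only [map_sum, map_mul, Complex.conj_conj, map_zero] at h1
          rw [← h1]
          refine Finset.sum_congr rfl fun u' _ => ?_
          congr 1
          rw [starRingEnd_apply]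
          exact (hM.1.apply u' u).symm
        rw [Fintype.sum_sum_type] at hrow
        simp only [hwdef, Sum.elim_inl, Sum.elim_inr] at hrow
        have t1 : ∀ a : Fin L₁, M (Sum.inl a) u * (P₂.eval z * z ^ (a : ℕ)) =
            P₂.eval z * (M (Sum.inl a) u * z ^ (a : ℕ)) := fun a => by ring
        have t2 : ∀ b : Fin L₂, M (Sum.inr b) u * (-(P₁.eval z) * z ^ (b : ℕ)) =
            -(P₁.eval z * (M (Sum.inr b) u * z ^ (b : ℕ))) := fun b => by ring
        rw [Finset.sum_congr rfl (fun a _ => t1 a), Finset.sum_congr rfl (fun b _ => t2 b),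
          ← Finset.mul_sum, Finset.sum_neg_distrib, ← Finset.mul_sum] at hrow
        have e1 : pu.eval z = (∑ a : Fin L₁, M (Sum.inl a) u * z ^ (a : ℕ)) -
            starRingEnd ℂ (x u) * P₁.eval z := by
          rw [hpu, ztrans_evalAux]
          simp only [hxdef, Sum.elim_inl]
          simp_rw [sub_mul]
          rw [Finset.sum_sub_distrib]
          congr 1
          have t3 : ∀ a : Fin L₁, x₁ a * starRingEnd ℂ (Sum.elim x₁ x₂ u) * z ^ (a : ℕ) =
              starRingEnd ℂ (Sum.elim x₁ x₂ u) * (x₁ a * z ^ (a : ℕ)) := fun a => by ring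
          rw [Finset.sum_congr rfl (fun a _ => t3 a), ← Finset.mul_sum, ← ztrans_evalAux x₁ z,
            ← hP₁]
        have e2 : qu.eval z = (∑ b : Fin L₂, M (Sum.inr b) u * z ^ (b : ℕ)) -
            starRingEnd ℂ (x u) * P₂.eval z := by
          rw [hqu, ztrans_evalAux]
          simp only [hxdef, Sum.elim_inr]
          simp_rw [sub_mul]
          rw [Finset.sum_sub_distrib]
          congr 1
          have t3 : ∀ b : Fin L₂, x₂ b * starRingEnd ℂ (Sum.elim x₁ x₂ u) * z ^ (b : ℕ) =
              starRingEnd ℂ (Sum.elim x₁ x₂ u) * (x₂ b * z ^ (b : ℕ)) := fun b => by ring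
          rw [Finset.sum_congr rfl (fun b _ => t3 b), ← Finset.mul_sum, ← ztrans_evalAux x₂ z,
            ← hP₂]
        rw [Polynomial.eval_sub, Polynomial.eval_mul, Polynomial.eval_mul, e1, e2]
        linear_combination hrow
      linear_combination hvan
    have hdvd : P₁ ∣ pu := hcop.dvd_of_dvd_mul_left ⟨qu, hpoly⟩
    have hpud : pu.natDegree ≤ P₁.natDegree := by
      rw [hP₁deg, hpu]; exact ztrans_natDegreeAux hL₁ _
    obtain ⟨c, hc⟩ := dvd_same_degAux hP₁ne hdvd hpud
    have hqc : qu = Polynomial.C c * P₂ :=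
      mul_left_cancel₀ hP₁ne (by rw [← hpoly, hc]; ring)
    refine ⟨c, fun a => ?_, fun b => ?_⟩
    · have h1 : pu.coeff (a : ℕ) = M (Sum.inl a) u - x (Sum.inl a) * starRingEnd ℂ (x u) := by
        rw [hpu, ztrans_coeffAux, dif_pos a.isLt]
      have h2 : P₁.coeff (a : ℕ) = x₁ a := by rw [hP₁, ztrans_coeffAux, dif_pos a.isLt]
      rw [← h1, hc, Polynomial.coeff_C_mul, h2]
    · have h1 : qu.coeff (b : ℕ) = M (Sum.inr b) u - x (Sum.inr b) * starRingEnd ℂ (x u) := by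
        rw [hqu, ztrans_coeffAux, dif_pos b.isLt]
      have h2 : P₂.coeff (b : ℕ) = x₂ b := by rw [hP₂, ztrans_coeffAux, dif_pos b.isLt]
      rw [← h1, hqc, Polynomial.coeff_C_mul, h2]
  choose c hcl hcr using hDcol
  have hD : ∀ (u u' : Fin L₁ ⊕ Fin L₂), M u' u - x u' * starRingEnd ℂ (x u) = c u * x u' := by
    intro u u'
    cases u' with
    | inl a => simpa [hxdef] using hcl u a
    | inr b => simpa [hxdef] using hcr u b
  have hsymm : ∀ (p q : Fin L₁ ⊕ Fin L₂), starRingEnd ℂ (M p q) = M q p := by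
    intro p q
    rw [starRingEnd_apply]
    exact hM.1.apply q p
  set u₀ : Fin L₁ ⊕ Fin L₂ := Sum.inl ⟨0, hL₁⟩ with hu₀
  have hx0 : x u₀ ≠ 0 := by simpa [hxdef, hu₀] using hx₁0
  have hcu : ∀ u : Fin L₁ ⊕ Fin L₂,
      c u * x u₀ = starRingEnd ℂ (c u₀) * starRingEnd ℂ (x u) := by
    intro u
    have h1 := hD u u₀
    have h2 := congrArg (starRingEnd ℂ) (hD u₀ u)
    simp only [map_sub, map_mul, Complex.conj_conj] at h2
    rw [hsymm u u₀] at h2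
    linear_combination h2 - h1
  have diagsum : ∀ f : Fin L₁ → Fin L₁ → ℂ,
      (∑ a : Fin L₁, ∑ b : Fin L₁,
        if ((a : ℕ) : ℤ) - ((b : ℕ) : ℤ) = (0 : ℤ) then f a b else 0) = ∑ a, f a a := by
    intro f
    refine Finset.sum_congr rfl fun a _ => ?_
    rw [Finset.sum_eq_single a]
    · rw [if_pos (by omega)]
    · intro b _ hb
      rw [if_neg]
      intro hab
      exact hb (Fin.ext (by omega))
    · intro ha; exact absurd (Finset.mem_univ a) ha
  have htr := h11 0
  rw [diagsum, diagsum] at htr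
  have hzero : ∑ a : Fin L₁, c (Sum.inl a) * x₁ a = 0 := by
    have t4 : ∀ a : Fin L₁, c (Sum.inl a) * x₁ a =
        M (Sum.inl a) (Sum.inl a) - x₁ a * starRingEnd ℂ (x₁ a) := by
      intro a
      have h := hD (Sum.inl a) (Sum.inl a)
      simp only [hxdef, Sum.elim_inl] at h
      exact h.symm
    rw [Finset.sum_congr rfl (fun a _ => t4 a), Finset.sum_sub_distrib, htr, sub_self]
  have hsumpos : (∑ a : Fin L₁, starRingEnd ℂ (x₁ a) * x₁ a) ≠ 0 := by
    have t5 : ∀ a : Fin L₁, starRingEnd ℂ (x₁ a) * x₁ a = (Complex.normSq (x₁ a) : ℂ) := by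
      intro a; rw [mul_comm, Complex.mul_conj]
    rw [Finset.sum_congr rfl (fun a _ => t5 a)]
    have hpos : 0 < ∑ a : Fin L₁, Complex.normSq (x₁ a) := by
      refine Finset.sum_pos' (fun a _ => Complex.normSq_nonneg _)
        ⟨⟨0, hL₁⟩, Finset.mem_univ _, Complex.normSq_pos.mpr hx₁0⟩
    rw [← Complex.ofReal_sum]
    exact_mod_cast hpos.ne'
  have hlam0 : starRingEnd ℂ (c u₀) = 0 := by
    have h4 : ∑ a : Fin L₁, (c (Sum.inl a) * x₁ a) * x u₀ = 0 := by
      rw [← Finset.sum_mul, hzero, zero_mul]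
    have h5 : ∀ a : Fin L₁, (c (Sum.inl a) * x₁ a) * x u₀ =
        starRingEnd ℂ (c u₀) * (starRingEnd ℂ (x₁ a) * x₁ a) := by
      intro a
      have h := hcu (Sum.inl a)
      simp only [hxdef, Sum.elim_inl] at h
      linear_combination x₁ a * h
    rw [Finset.sum_congr rfl (fun a _ => h5 a), ← Finset.mul_sum] at h4
    exact (mul_eq_zero.mp h4).resolve_right hsumpos
  have hc0 : ∀ u, c u = 0 := by
    intro u
    have h := hcu u
    rw [hlam0, zero_mul] at h
    exact (mul_eq_zero.mp h).resolve_right (by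
      intro h0
      exact hx0 (by
        have := congrArg (starRingEnd ℂ) h0
        simpa using this))
  ext u u'
  rw [Matrix.vecMulVec_apply]
  have h := hD u' u
  rw [hc0, zero_mul, sub_eq_zero] at h
  exact h
end

section
/- Uniqueness of the feasible SDP via a dual certificate: Let n, M : ℕ, let A : Fin M → Matrix (Fin n) (Fin n) ℂ be sensing matrices, and let x : Fin n → ℂ with x ≠ 0. Write 𝒜(X) m := Matrix.trace (A m * X), and let P := Matrix.vecMulVec x (fun j => conj (x j)) be the outer product x x*. Assume: (1) there exists λ : Fin M → ℂ such that the matrix W := Σ_m (λ m • A m + (conj (λ m)) • (A m)ᴴ) satisfies (i) W.mulVec x = 0, (ii) Matrix.rank W = n - 1, and (iii) Matrix.PosSemidef W; and (2) for every h : Fin n → ℂ, if Matrix.trace (A m * (Matrix.vecMulVec x (fun j => conj (h j)) + Matrix.vecMulVec h (fun j => conj (x j)))) = 0 for all m, then Matrix.vecMulVec x (fun j => conj (h j)) + Matrix.vecMulVec h (fun j => conj (x j)) = 0. Then every X : Matrix (Fin n) (Fin n) ℂ with Matrix.PosSemidef X and 𝒜(X) = 𝒜(P) satisfies X = P. -/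
open Matrix
open scoped ComplexOrder

/-- If `trace (Nᴴ * N) = 0` then `N = 0`. -/
lemma aux_trace_conjTranspose_mul_self_eq_zero {n : ℕ}
    (N : Matrix (Fin n) (Fin n) ℂ) (h : Matrix.trace (Nᴴ * N) = 0) : N = 0 := by
  have htr : Matrix.trace (Nᴴ * N) = ((∑ j, ∑ i, Complex.normSq (N i j) : ℝ) : ℂ) := by
    simp only [Matrix.trace, Matrix.diag, Matrix.mul_apply, Matrix.conjTranspose_apply]
    push_cast
    refine Finset.sum_congr rfl fun j _ => Finset.sum_congr rfl fun i _ => ?_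
    rw [Complex.normSq_eq_conj_mul_self]
    rfl
  rw [htr] at h
  have key : ∑ j, ∑ i, Complex.normSq (N i j) = 0 := by exact_mod_cast h
  ext i j
  have h1 := (Finset.sum_eq_zero_iff_of_nonneg
    (fun j _ => Finset.sum_nonneg fun i _ => Complex.normSq_nonneg _)).mp key j
    (Finset.mem_univ j)
  have h2 := (Finset.sum_eq_zero_iff_of_nonneg
    (fun i _ => Complex.normSq_nonneg _)).mp h1 i (Finset.mem_univ i)
  simpa using Complex.normSq_eq_zero.mp h2

/-- For PSD matrices, zero trace of the product forces the product to vanish. -/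
lemma aux_psd_trace_mul_eq_zero {n : ℕ} {W X : Matrix (Fin n) (Fin n) ℂ}
    (hW : W.PosSemidef) (hX : X.PosSemidef) (h : Matrix.trace (W * X) = 0) :
    W * X = 0 := by
  obtain ⟨B, hB⟩ : ∃ B : Matrix (Fin n) (Fin n) ℂ, W = Bᴴ * B := by
    open scoped MatrixOrder in exact CStarAlgebra.nonneg_iff_eq_star_mul_self.mp hW.nonneg
  obtain ⟨C, hC⟩ : ∃ C : Matrix (Fin n) (Fin n) ℂ, X = Cᴴ * C := by
    open scoped MatrixOrder in exact CStarAlgebra.nonneg_iff_eq_star_mul_self.mp hX.nonneg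
  have key : Matrix.trace ((B * Cᴴ)ᴴ * (B * Cᴴ)) = Matrix.trace (W * X) := by
    rw [Matrix.conjTranspose_mul, Matrix.conjTranspose_conjTranspose, hB, hC]
    rw [show C * Bᴴ * (B * Cᴴ) = C * (Bᴴ * (B * Cᴴ)) by noncomm_ring]
    rw [Matrix.trace_mul_comm]
    congr 1
    noncomm_ring
  have hN : B * Cᴴ = 0 :=
    aux_trace_conjTranspose_mul_self_eq_zero _ (by rw [key, h])
  rw [hB, hC, show Bᴴ * B * (Cᴴ * C) = Bᴴ * (B * Cᴴ) * C by noncomm_ring, hN,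
    Matrix.mul_zero, Matrix.zero_mul]

/-- Uniqueness of the feasible SDP via a dual certificate. -/
theorem sdp_dual_certificate_uniqueness (n M : ℕ)
    (A : Fin M → Matrix (Fin n) (Fin n) ℂ)
    (x : Fin n → ℂ) (hx : x ≠ 0)
    (h1 : ∃ lam : Fin M → ℂ, ∃ W : Matrix (Fin n) (Fin n) ℂ,
      W = (∑ m : Fin M, (lam m • A m + (starRingEnd ℂ) (lam m) • (A m)ᴴ)) ∧
      W.mulVec x = 0 ∧ W.rank = n - 1 ∧ W.PosSemidef)
    (h2 : ∀ h : Fin n → ℂ,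
      (∀ m : Fin M, Matrix.trace (A m *
          (Matrix.vecMulVec x (fun j => (starRingEnd ℂ) (h j)) +
           Matrix.vecMulVec h (fun j => (starRingEnd ℂ) (x j)))) = 0) →
      Matrix.vecMulVec x (fun j => (starRingEnd ℂ) (h j)) +
        Matrix.vecMulVec h (fun j => (starRingEnd ℂ) (x j)) = 0)
    (X : Matrix (Fin n) (Fin n) ℂ) (hX : X.PosSemidef)
    (hfeas : ∀ m : Fin M, Matrix.trace (A m * X) =
      Matrix.trace (A m * Matrix.vecMulVec x (fun j => (starRingEnd ℂ) (x j)))) :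
    X = Matrix.vecMulVec x (fun j => (starRingEnd ℂ) (x j)) := by
  classical
  obtain ⟨lam, W, hWdef, hWx, hWrank, hWpsd⟩ := h1
  set P : Matrix (Fin n) (Fin n) ℂ :=
    Matrix.vecMulVec x (fun j => (starRingEnd ℂ) (x j)) with hPdef
  have hXherm : Xᴴ = X := hX.1
  have hPherm : Pᴴ = P := by
    ext i j
    simp [hPdef, Matrix.vecMulVec_apply, mul_comm]
  -- key trace formula for Hermitian matrices
  have key : ∀ (Y : Matrix (Fin n) (Fin n) ℂ), Yᴴ = Y →
      Matrix.trace (W * Y) = ∑ m, (lam m * Matrix.trace (A m * Y) +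
        (starRingEnd ℂ) (lam m) * (starRingEnd ℂ) (Matrix.trace (A m * Y))) := by
    intro Y hY
    rw [hWdef, Finset.sum_mul, Matrix.trace_sum]
    refine Finset.sum_congr rfl fun m _ => ?_
    rw [Matrix.add_mul, Matrix.trace_add, Matrix.smul_mul, Matrix.smul_mul,
      Matrix.trace_smul, Matrix.trace_smul, smul_eq_mul, smul_eq_mul]
    congr 1
    congr 1
    calc Matrix.trace ((A m)ᴴ * Y) = Matrix.trace ((Y * A m)ᴴ) := by
          rw [Matrix.conjTranspose_mul, hY]
      _ = (starRingEnd ℂ) (Matrix.trace (Y * A m)) := Matrix.trace_conjTranspose _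
      _ = (starRingEnd ℂ) (Matrix.trace (A m * Y)) := by rw [Matrix.trace_mul_comm]
  have hmulx : ∀ i, W.mulVec x i = 0 := fun i => congrFun hWx i
  have htrWP : Matrix.trace (W * P) = 0 := by
    simp only [hPdef, Matrix.trace, Matrix.diag, Matrix.mul_apply,
      Matrix.vecMulVec_apply]
    have : ∀ i : Fin n, ∑ j, W i j * (x j * (starRingEnd ℂ) (x i)) =
        (W.mulVec x i) * (starRingEnd ℂ) (x i) := by
      intro i
      simp only [Matrix.mulVec, dotProduct, Finset.sum_mul]
      refine Finset.sum_congr rfl fun j _ => by ring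
    simp [this, hmulx]
  have htrWX : Matrix.trace (W * X) = 0 := by
    rw [key X hXherm]
    rw [show (0 : ℂ) = Matrix.trace (W * P) from htrWP.symm, key P hPherm]
    exact Finset.sum_congr rfl fun m _ => by rw [hfeas m]
  have hWX0 : W * X = 0 := aux_psd_trace_mul_eq_zero hWpsd hX htrWX
  -- the kernel of W is spanned by x
  have hn : 1 ≤ n := by
    rcases Nat.eq_zero_or_pos n with h | h
    · exfalso; apply hx; subst h; ext i; exact absurd i.2 (by omega)
    · exact h
  have hker : (Submodule.span ℂ {x}) = LinearMap.ker W.mulVecLin := by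
    have hle : Submodule.span ℂ {x} ≤ LinearMap.ker W.mulVecLin := by
      rw [Submodule.span_singleton_le_iff_mem]
      simpa [Matrix.mulVecLin_apply] using hWx
    have hrn := LinearMap.finrank_range_add_finrank_ker W.mulVecLin
    rw [Module.finrank_pi] at hrn
    have hrank : Module.finrank ℂ (LinearMap.range W.mulVecLin) = n - 1 := hWrank
    have hkerdim : Module.finrank ℂ (LinearMap.ker W.mulVecLin) = 1 := by
      simp only [Fintype.card_fin] at hrn
      omega
    refine Submodule.eq_of_le_of_finrank_le hle ?_
    rw [hkerdim, finrank_span_singleton hx]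
  -- each column of X is a multiple of x
  have hcol : ∀ j : Fin n, ∃ c : ℂ, (fun k => X k j) = c • x := by
    intro j
    have hmem : (fun k => X k j) ∈ LinearMap.ker W.mulVecLin := by
      rw [LinearMap.mem_ker, Matrix.mulVecLin_apply]
      ext i
      have := congrFun (congrFun hWX0 i) j
      simpa [Matrix.mul_apply, Matrix.mulVec, dotProduct] using this
    rw [← hker] at hmem
    obtain ⟨c, hc⟩ := Submodule.mem_span_singleton.mp hmem
    exact ⟨c, hc.symm⟩
  choose c hc using hcol
  have hXentry : ∀ i j, X i j = c j * x i := fun i j => congrFun (hc j) i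
  set v : Fin n → ℂ := fun j => (starRingEnd ℂ) (c j) with hv
  set hvec : Fin n → ℂ := (2 : ℂ)⁻¹ • (v - x) with hhvec
  have hX1 : ∀ i j, X i j = x i * (starRingEnd ℂ) (v j) := by
    intro i j
    rw [hXentry i j]
    simp [hv, mul_comm]
  have hX2 : ∀ i j, X i j = v i * (starRingEnd ℂ) (x j) := by
    intro i j
    have := congrFun (congrFun hXherm i) j
    rw [Matrix.conjTranspose_apply] at this
    rw [← this, hXentry j i]
    simp [hv, mul_comm]
  have hE : Matrix.vecMulVec x (fun j => (starRingEnd ℂ) (hvec j)) +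
      Matrix.vecMulVec hvec (fun j => (starRingEnd ℂ) (x j)) = X - P := by
    ext i j
    have c2 : (starRingEnd ℂ) (hvec j) =
        (2 : ℂ)⁻¹ * ((starRingEnd ℂ) (v j) - (starRingEnd ℂ) (x j)) := by
      rw [hhvec]
      simp only [Pi.smul_apply, Pi.sub_apply, smul_eq_mul, _root_.map_mul, map_sub,
        map_inv₀, map_ofNat]
    have c3 : hvec i = (2 : ℂ)⁻¹ * (v i - x i) := by
      rw [hhvec]; simp
    simp only [Matrix.add_apply, Matrix.sub_apply, Matrix.vecMulVec_apply, hPdef, c2, c3]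
    linear_combination (-(2 : ℂ)⁻¹) * (hX1 i j) + (-(2 : ℂ)⁻¹) * (hX2 i j)
  have hEtr : ∀ m : Fin M, Matrix.trace (A m *
      (Matrix.vecMulVec x (fun j => (starRingEnd ℂ) (hvec j)) +
       Matrix.vecMulVec hvec (fun j => (starRingEnd ℂ) (x j)))) = 0 := by
    intro m
    rw [hE, Matrix.mul_sub, Matrix.trace_sub, hfeas m, sub_self]
  have := h2 hvec hEtr
  rw [hE] at this
  exact sub_eq_zero.mp this
end

section
/- Let x, h : Fin n → ℂ and let H : Matrix (Fin n) (Fin n) ℂ be Hermitian with H.mulVec x = 0. If the matrix Matrix.vecMulVec x (fun j => conj (x j)) + (Matrix.vecMulVec x (fun j => conj (h j)) + Matrix.vecMulVec h (fun j => conj (x j))) + H is positive semidefinite, then H is positive semidefinite. (The component of a feasible perturbation orthogonal to the tangent space at x x* is itself positive semidefinite.) -/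
open scoped ComplexOrder
open Matrix

lemma vecMulVec_mulVec_aux {n : ℕ} (u v w : Fin n → ℂ) :
    (Matrix.vecMulVec u v).mulVec w = (v ⬝ᵥ w) • u := by
  ext i
  simp only [Matrix.mulVec, Matrix.vecMulVec, dotProduct, Pi.smul_apply,
    smul_eq_mul, Matrix.of_apply, Finset.sum_mul]
  exact Finset.sum_congr rfl fun j _ => by ring

/-- The component of a feasible perturbation orthogonal to the tangent space at
`x x*` is itself positive semidefinite. -/
theorem orthogonal_component_posSemidef {n : ℕ}
    (x h : Fin n → ℂ) (H : Matrix (Fin n) (Fin n) ℂ)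
    (hH : H.IsHermitian) (hHx : H.mulVec x = 0)
    (hpos : (Matrix.vecMulVec x (fun j => (starRingEnd ℂ) (x j)) +
        (Matrix.vecMulVec x (fun j => (starRingEnd ℂ) (h j)) +
         Matrix.vecMulVec h (fun j => (starRingEnd ℂ) (x j))) + H).PosSemidef) :
    H.PosSemidef := by
  have hxH : Matrix.vecMul (star x) H = 0 := by
    have := congrArg star hHx
    rw [Matrix.star_mulVec, hH.eq] at this
    simpa using this
  refine Matrix.PosSemidef.of_dotProduct_mulVec_nonneg hH fun z => ?_
  set c : ℂ := if x = 0 then 0 else -((star x ⬝ᵥ z) / (star x ⬝ᵥ x)) with hc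
  set w : Fin n → ℂ := z + c • x with hwdef
  have hw : star x ⬝ᵥ w = 0 := by
    by_cases hx : x = 0
    · simp [hwdef, hx]
    · have hs : (star x ⬝ᵥ x) ≠ 0 := by
        simpa [dotProduct_star_self_eq_zero] using hx
      simp only [hwdef, hc, if_neg hx, dotProduct_add, dotProduct_smul,
        smul_eq_mul]
      field_simp
      ring
  have hw' : star w ⬝ᵥ x = 0 := by
    have := congrArg star hw
    rw [Matrix.star_dotProduct] at this
    simpa using this
  have hq := hpos.dotProduct_mulVec_nonneg w
  have hstarx : (fun j => (starRingEnd ℂ) (x j)) = star x := rfl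
  have hstarh : (fun j => (starRingEnd ℂ) (h j)) = star h := rfl
  have hHw : H.mulVec w = H.mulVec z := by
    simp [hwdef, Matrix.mulVec_add, Matrix.mulVec_smul, hHx]
  have hxHz : star x ⬝ᵥ H.mulVec z = 0 := by
    rw [Matrix.dotProduct_mulVec, hxH, zero_dotProduct]
  have key : star w ⬝ᵥ (Matrix.vecMulVec x (fun j => (starRingEnd ℂ) (x j)) +
        (Matrix.vecMulVec x (fun j => (starRingEnd ℂ) (h j)) +
         Matrix.vecMulVec h (fun j => (starRingEnd ℂ) (x j))) + H).mulVec w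
      = star z ⬝ᵥ H.mulVec z := by
    rw [Matrix.add_mulVec, Matrix.add_mulVec, Matrix.add_mulVec]
    rw [hstarx, hstarh, vecMulVec_mulVec_aux, vecMulVec_mulVec_aux, vecMulVec_mulVec_aux]
    rw [hw, hHw]
    simp only [dotProduct_add, dotProduct_smul, hw', smul_eq_mul,
      zero_smul, dotProduct_zero, mul_zero, zero_add, add_zero]
    have : star w ⬝ᵥ H.mulVec z = star z ⬝ᵥ H.mulVec z + (starRingEnd ℂ) c * (star x ⬝ᵥ H.mulVec z) := by
      simp [hwdef, star_add, star_smul, add_dotProduct, smul_dotProduct,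
        smul_eq_mul]
    rw [this, hxHz, mul_zero, add_zero]
  rw [key] at hq
  exact hq
end

section
/- Let W, H : Matrix (Fin n) (Fin n) ℂ be positive semidefinite, and let x : Fin n → ℂ with x ≠ 0. If W.mulVec x = 0, Matrix.rank W = n - 1, H.mulVec x = 0, and Matrix.trace (W * H) = 0, then H = 0. -/
open scoped ComplexOrder
open Matrix
open scoped MatrixOrder

/-- A PSD matrix with zero trace is zero. -/
lemma psd_trace_zero_aux {n : ℕ} {M : Matrix (Fin n) (Fin n) ℂ}
    (hM : M.PosSemidef) (h : Matrix.trace M = 0) : M = 0 := by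
  set S := CFC.sqrt M with hSdef
  have hS : S.PosSemidef := (CFC.sqrt_nonneg M).posSemidef
  have hSS : Sᴴ * S = M := by
    rw [hS.isHermitian.eq, CFC.sqrt_mul_sqrt_self M hM.nonneg]
  have hdiag : ∀ j, (Sᴴ * S) j j = star (fun i => S i j) ⬝ᵥ (fun i => S i j) := by
    intro j
    simp [Matrix.mul_apply, dotProduct, Matrix.conjTranspose_apply]
  have htr : ∑ j, (Sᴴ * S) j j = 0 := by
    rw [hSS]; exact h
  have hzero : ∀ j, (Sᴴ * S) j j = 0 := by
    have := (Fintype.sum_eq_zero_iff_of_nonneg (f := fun j => (Sᴴ * S) j j)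
      (fun j => by
        show (0 : ℂ) ≤ (Sᴴ * S) j j
        rw [hdiag j]; exact dotProduct_star_self_nonneg _)).mp htr
    intro j; exact congrFun this j
  have hScol : S = 0 := by
    ext i j
    have := (dotProduct_star_self_eq_zero (v := fun i => S i j)).mp
      (by rw [← hdiag j]; exact hzero j)
    exact congrFun this i
  rw [← hSS, hScol]; simp

/-- A PSD matrix annihilating `x`, trace-orthogonal to a PSD dual certificate of
rank `n - 1` whose nullspace is spanned by `x`, must vanish. -/
theorem psd_trace_orthogonal_rank_certificate {n : ℕ}
    (W H : Matrix (Fin n) (Fin n) ℂ)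
    (hW : W.PosSemidef) (hH : H.PosSemidef)
    (x : Fin n → ℂ) (hx : x ≠ 0)
    (hWx : W.mulVec x = 0) (hrank : W.rank = n - 1)
    (hHx : H.mulVec x = 0) (htr : Matrix.trace (W * H) = 0) :
    H = 0 := by
  -- kernel of W is spanned by x
  have hn : 1 ≤ n := by
    rcases Nat.eq_zero_or_pos n with h0 | h; · exact absurd (funext fun i => absurd i.2 (by omega)) hx
    exact h
  have hker : LinearMap.ker W.mulVecLin = Submodule.span ℂ {x} := by
    have hxker : x ∈ LinearMap.ker W.mulVecLin := by
      simp [Matrix.mulVecLin_apply, hWx]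
    have hle : Submodule.span ℂ {x} ≤ LinearMap.ker W.mulVecLin :=
      Submodule.span_le.mpr (by simpa using hxker)
    have hrn : Module.finrank ℂ (LinearMap.range W.mulVecLin)
        + Module.finrank ℂ (LinearMap.ker W.mulVecLin) = n := by
      simpa using LinearMap.finrank_range_add_finrank_ker W.mulVecLin
    have hkerdim : Module.finrank ℂ (LinearMap.ker W.mulVecLin) = 1 := by
      have : W.rank = Module.finrank ℂ (LinearMap.range W.mulVecLin) := rfl
      omega
    symm
    apply Submodule.eq_of_le_of_finrank_le hle
    rw [hkerdim, finrank_span_singleton hx]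
  -- square roots
  set S := CFC.sqrt H with hSdef
  have hS : S.PosSemidef := (CFC.sqrt_nonneg H).posSemidef
  have hSS : S * S = H := CFC.sqrt_mul_sqrt_self H hH.nonneg
  set R := CFC.sqrt W with hRdef
  have hR : R.PosSemidef := (CFC.sqrt_nonneg W).posSemidef
  have hRR : R * R = W := CFC.sqrt_mul_sqrt_self W hW.nonneg
  -- trace (S * W * S) = 0, and it's PSD, so S * W * S = 0
  have hSWS : S * W * S = 0 := by
    apply psd_trace_zero_aux
    · have := hW.conjTranspose_mul_mul_same S
      rwa [hS.isHermitian.eq] at this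
    · calc Matrix.trace (S * W * S) = Matrix.trace (W * S * S) :=
            (Matrix.trace_mul_cycle W S S).symm
        _ = Matrix.trace (W * H) := by rw [Matrix.mul_assoc, hSS]
        _ = 0 := htr
  -- hence W * S = 0
  have hWS : W * S = 0 := by
    have h1 : (R * S)ᴴ * (R * S) = 0 := by
      rw [Matrix.conjTranspose_mul, hR.isHermitian.eq, ← Matrix.mul_assoc,
        Matrix.mul_assoc Sᴴ, hRR, hS.isHermitian.eq]
      exact hSWS
    have h2 : R * S = 0 := Matrix.conjTranspose_mul_self_eq_zero.mp h1
    rw [← hRR, Matrix.mul_assoc, h2, Matrix.mul_zero]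
  -- S x = 0
  have key : ∀ y, star x ⬝ᵥ S.mulVec y = star (S.mulVec x) ⬝ᵥ y := by
    intro y
    rw [dotProduct_mulVec, Matrix.star_mulVec, hS.isHermitian.eq]
  have hSx : S.mulVec x = 0 := by
    have h2 : star (S.mulVec x) ⬝ᵥ S.mulVec x = 0 := by
      rw [← key, Matrix.mulVec_mulVec, hSS, hHx]; simp
    exact dotProduct_star_self_eq_zero.mp h2
  -- columns of S lie in span of x
  have hcol : ∀ v : Fin n → ℂ, ∃ c : ℂ, S.mulVec v = c • x := by
    intro v
    have : S.mulVec v ∈ LinearMap.ker W.mulVecLin := by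
      simp only [LinearMap.mem_ker, Matrix.mulVecLin_apply, Matrix.mulVec_mulVec, hWS]
      simp
    rw [hker, Submodule.mem_span_singleton] at this
    obtain ⟨c, hc⟩ := this
    exact ⟨c, hc.symm⟩
  -- each column is zero
  have hSzero : S = 0 := by
    have hxx : star x ⬝ᵥ x ≠ 0 := fun h => hx (dotProduct_star_self_eq_zero.mp h)
    ext i j
    obtain ⟨c, hc⟩ := hcol (Pi.single j 1)
    have hdot : star x ⬝ᵥ S.mulVec (Pi.single j 1) = 0 := by
      rw [key, hSx]; simp
    rw [hc] at hdot
    have hc0 : c = 0 := by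
      rw [dotProduct_smul] at hdot
      rcases mul_eq_zero.mp hdot with h | h
      · exact h
      · exact absurd h hxx
    have : S.mulVec (Pi.single j 1) = 0 := by rw [hc, hc0, zero_smul]
    have := congrFun this i
    simpa [Matrix.mulVec_single] using this
  rw [← hSS, hSzero]; simp
end

section
/- Sylvester's rank theorem for the degree of the GCD: Let a, b : Polynomial ℂ be nonzero with natDegree a = L₁ and natDegree b = L₂, and let S : Matrix (Fin (L₁ + L₂)) (Fin (L₁ + L₂)) ℂ be the Sylvester matrix of a and b, defined entrywise by S r c = b.coeff (r - c) if c < L₁ (interpreting b.coeff of a negative index, i.e. r < c, as 0) and S r c = a.coeff (r - (c - L₁)) if L₁ ≤ c (again 0 when r < c - L₁). Then natDegree (EuclideanDomain.gcd a b) = L₁ + L₂ - Matrix.rank S. -/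
open Polynomial Matrix LinearMap

lemma degLT_mul_aux (p q : Polynomial ℂ) (m : ℕ) (hp : p ≠ 0) (hq : q.degree < (m : ℕ)) :
    (p * q).degree < ((p.natDegree + m : ℕ) : WithBot ℕ) := by
  rcases eq_or_ne q 0 with rfl | hq0
  · rw [mul_zero, degree_zero]; exact WithBot.bot_lt_coe _
  · rw [degree_mul, degree_eq_natDegree hp, degree_eq_natDegree hq0]
    rw [degree_eq_natDegree hq0] at hq
    exact_mod_cast Nat.add_lt_add_left (by exact_mod_cast hq) _



/-- Sylvester's rank theorem: the degree of the GCD of `a` and `b` equals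
`L₁ + L₂` minus the rank of their Sylvester matrix. -/
theorem sylvester_rank_gcd (a b : Polynomial ℂ) (L₁ L₂ : ℕ)
    (ha : a ≠ 0) (hb : b ≠ 0)
    (hL₁ : a.natDegree = L₁) (hL₂ : b.natDegree = L₂)
    (S : Matrix (Fin (L₁ + L₂)) (Fin (L₁ + L₂)) ℂ)
    (hS : ∀ r c : Fin (L₁ + L₂),
      S r c = if (c : ℕ) < L₁
        then (if (c : ℕ) ≤ (r : ℕ) then b.coeff ((r : ℕ) - (c : ℕ)) else 0)
        else (if (c : ℕ) - L₁ ≤ (r : ℕ) then a.coeff ((r : ℕ) - ((c : ℕ) - L₁)) else 0)) :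
    (EuclideanDomain.gcd a b).natDegree = L₁ + L₂ - S.rank := by
  set g := EuclideanDomain.gcd a b with hgdef
  have hg0 : g ≠ 0 := fun h => ha (EuclideanDomain.gcd_eq_zero_iff.mp h).1
  obtain ⟨a', ha'⟩ : g ∣ a := EuclideanDomain.gcd_dvd_left a b
  obtain ⟨b', hb'⟩ : g ∣ b := EuclideanDomain.gcd_dvd_right a b
  have ha'0 : a' ≠ 0 := fun h => ha (by rw [ha', h, mul_zero])
  have hb'0 : b' ≠ 0 := fun h => hb (by rw [hb', h, mul_zero])
  set d := g.natDegree with hd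
  have hda' : d + a'.natDegree = L₁ := by rw [← hL₁, ha', natDegree_mul hg0 ha'0]
  have hdb' : d + b'.natDegree = L₂ := by rw [← hL₂, hb', natDegree_mul hg0 hb'0]
  have hcop : IsCoprime a' b' := by
    refine ⟨EuclideanDomain.gcdA a b, EuclideanDomain.gcdB a b,
      mul_left_cancel₀ hg0 ?_⟩
    have hbez := EuclideanDomain.gcd_eq_gcd_ab a b
    rw [mul_one]
    linear_combination (-1 : Polynomial ℂ) * hbez -
      EuclideanDomain.gcdA a b * ha' - EuclideanDomain.gcdB a b * hb'
  -- the polynomial-building linear maps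
  let Q : (Fin (L₁ + L₂) → ℂ) →ₗ[ℂ] Polynomial ℂ :=
    (degreeLT ℂ L₁).subtype ∘ₗ (degreeLTEquiv ℂ L₁).symm.toLinearMap ∘ₗ
      LinearMap.funLeft ℂ ℂ (Fin.castAdd L₂)
  let P : (Fin (L₁ + L₂) → ℂ) →ₗ[ℂ] Polynomial ℂ :=
    (degreeLT ℂ L₂).subtype ∘ₗ (degreeLTEquiv ℂ L₂).symm.toLinearMap ∘ₗ
      LinearMap.funLeft ℂ ℂ (Fin.natAdd L₁)
  have hQmem : ∀ x, Q x ∈ degreeLT ℂ L₁ := fun x =>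
    ((degreeLTEquiv ℂ L₁).symm (x ∘ Fin.castAdd L₂)).2
  have hPmem : ∀ x, P x ∈ degreeLT ℂ L₂ := fun x =>
    ((degreeLTEquiv ℂ L₂).symm (x ∘ Fin.natAdd L₁)).2
  have hQcoeff : ∀ x (i : Fin L₁), (Q x).coeff i = x (Fin.castAdd L₂ i) := by
    intro x i
    exact congrFun ((degreeLTEquiv ℂ L₁).apply_symm_apply (x ∘ Fin.castAdd L₂)) i
  have hPcoeff : ∀ x (i : Fin L₂), (P x).coeff i = x (Fin.natAdd L₁ i) := by
    intro x i
    exact congrFun ((degreeLTEquiv ℂ L₂).apply_symm_apply (x ∘ Fin.natAdd L₁)) i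
  have hQhigh : ∀ x (i : ℕ), L₁ ≤ i → (Q x).coeff i = 0 := fun x i hi =>
    coeff_eq_zero_of_degree_lt (lt_of_lt_of_le (mem_degreeLT.mp (hQmem x)) (by exact_mod_cast hi))
  have hPhigh : ∀ x (i : ℕ), L₂ ≤ i → (P x).coeff i = 0 := fun x i hi =>
    coeff_eq_zero_of_degree_lt (lt_of_lt_of_le (mem_degreeLT.mp (hPmem x)) (by exact_mod_cast hi))
  let Φ : (Fin (L₁ + L₂) → ℂ) →ₗ[ℂ] Polynomial ℂ :=
    (LinearMap.mulLeft ℂ b) ∘ₗ Q + (LinearMap.mulLeft ℂ a) ∘ₗ P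
  have hΦ : ∀ x, Φ x = b * Q x + a * P x := fun x => rfl
  let π : Polynomial ℂ →ₗ[ℂ] (Fin (L₁ + L₂) → ℂ) := LinearMap.pi fun r : Fin (L₁ + L₂) => lcoeff ℂ (r : ℕ)
  -- step 1 : S.mulVecLin = π ∘ Φ
  have hmain : S.mulVecLin = π ∘ₗ Φ := by
    refine Module.Basis.ext (Pi.basisFun ℂ (Fin (L₁ + L₂))) fun j => ?_
    rw [Pi.basisFun_apply]
    funext r
    have hLHS : S.mulVecLin (Pi.single j 1) r = S r j := by
      simp [Matrix.mulVecLin_apply, Matrix.mulVec_single]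
    have hRHS : (π ∘ₗ Φ) (Pi.single j 1) r = (Φ (Pi.single j 1)).coeff r := rfl
    rw [hLHS, hRHS, hΦ, hS r j]
    by_cases hj : (j : ℕ) < L₁
    · have hQ : Q (Pi.single j 1) = X ^ (j : ℕ) := by
        ext i
        by_cases hi : i < L₁
        · rw [show i = ((⟨i, hi⟩ : Fin L₁) : ℕ) from rfl, hQcoeff]
          simp only [Pi.single_apply, coeff_X_pow, Fin.ext_iff, Fin.coe_castAdd]
        · rw [hQhigh _ _ (le_of_not_gt hi), coeff_X_pow, if_neg (by omega)]
      have hP : P (Pi.single j 1) = 0 := by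
        ext i
        rw [coeff_zero]
        by_cases hi : i < L₂
        · rw [show i = ((⟨i, hi⟩ : Fin L₂) : ℕ) from rfl, hPcoeff, Pi.single_apply,
            if_neg (by simp only [Fin.ext_iff, Fin.coe_natAdd]; omega)]
        · exact hPhigh _ _ (le_of_not_gt hi)
      rw [hQ, hP, mul_zero, add_zero, coeff_mul_X_pow', if_pos hj]
    · have hQ : Q (Pi.single j 1) = 0 := by
        ext i
        rw [coeff_zero]
        by_cases hi : i < L₁
        · rw [show i = ((⟨i, hi⟩ : Fin L₁) : ℕ) from rfl, hQcoeff, Pi.single_apply,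
            if_neg (by simp only [Fin.ext_iff, Fin.coe_castAdd]; omega)]
        · exact hQhigh _ _ (le_of_not_gt hi)
      have hP : P (Pi.single j 1) = X ^ ((j : ℕ) - L₁) := by
        ext i
        by_cases hi : i < L₂
        · rw [show i = ((⟨i, hi⟩ : Fin L₂) : ℕ) from rfl, hPcoeff]
          simp only [Pi.single_apply, coeff_X_pow, Fin.ext_iff, Fin.coe_natAdd]
          have hjn : (j : ℕ) < L₁ + L₂ := j.isLt
          by_cases h1 : L₁ + i = (j : ℕ)
          · rw [if_pos h1, if_pos (by omega)]
          · rw [if_neg h1, if_neg (by omega)]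
        · rw [hPhigh _ _ (le_of_not_gt hi), coeff_X_pow, if_neg (by
            have hjn : (j : ℕ) < L₁ + L₂ := j.isLt
            omega)]
      rw [hQ, hP, mul_zero, zero_add, coeff_mul_X_pow', if_neg hj]
  -- the kernel of the Sylvester map
  have hrk : S.rank = Module.finrank ℂ (LinearMap.range S.mulVecLin) := rfl
  have hΦmem : ∀ x, Φ x ∈ degreeLT ℂ (L₁ + L₂) := by
    intro x
    rw [mem_degreeLT, hΦ]
    have h1 : (b * Q x).degree < ((L₂ + L₁ : ℕ) : WithBot ℕ) := by
      have := degLT_mul_aux b (Q x) L₁ hb (mem_degreeLT.mp (hQmem x))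
      rwa [hL₂] at this
    have h2 : (a * P x).degree < ((L₁ + L₂ : ℕ) : WithBot ℕ) := by
      have := degLT_mul_aux a (P x) L₂ ha (mem_degreeLT.mp (hPmem x))
      rwa [hL₁] at this
    rw [Nat.add_comm L₂ L₁] at h1
    exact lt_of_le_of_lt (degree_add_le _ _) (max_lt h1 h2)
  have hker : LinearMap.ker S.mulVecLin = LinearMap.ker Φ := by
    rw [hmain]
    ext x
    simp only [LinearMap.mem_ker, LinearMap.comp_apply]
    constructor
    · intro h
      have hdeg := mem_degreeLT.mp (hΦmem x)
      ext i
      rw [coeff_zero]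
      by_cases hi : i < L₁ + L₂
      · exact congrFun h ⟨i, hi⟩
      · exact coeff_eq_zero_of_degree_lt
          (lt_of_lt_of_le hdeg (by exact_mod_cast le_of_not_gt hi))
    · intro h; rw [h]; exact map_zero π
  let μ₀ : Polynomial ℂ →ₗ[ℂ] (Fin (L₁ + L₂) → ℂ) :=
    LinearMap.pi fun c : Fin (L₁ + L₂) =>
      if (c : ℕ) < L₁ then (lcoeff ℂ (c : ℕ)) ∘ₗ (LinearMap.mulLeft ℂ a')
      else -((lcoeff ℂ ((c : ℕ) - L₁)) ∘ₗ (LinearMap.mulLeft ℂ b'))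
  have hμ₀ : ∀ t (c : Fin (L₁ + L₂)), μ₀ t c =
      if (c : ℕ) < L₁ then (a' * t).coeff (c : ℕ)
      else -((b' * t).coeff ((c : ℕ) - L₁)) := by
    intro t c
    by_cases hc : (c : ℕ) < L₁
    · simp only [μ₀, LinearMap.pi_apply, if_pos hc]; rfl
    · simp only [μ₀, LinearMap.pi_apply, if_neg hc]; rfl
  have hμmem : ∀ t ∈ degreeLT ℂ d, μ₀ t ∈ LinearMap.ker S.mulVecLin := by
    intro t ht
    rw [hker, LinearMap.mem_ker, hΦ]
    have hQμ : Q (μ₀ t) = a' * t := by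
      ext i
      by_cases hi : i < L₁
      · rw [show i = ((⟨i, hi⟩ : Fin L₁) : ℕ) from rfl, hQcoeff, hμ₀]
        simp only [Fin.coe_castAdd]
        rw [if_pos hi]
      · rw [hQhigh _ _ (le_of_not_gt hi)]
        refine (coeff_eq_zero_of_degree_lt ?_).symm
        refine lt_of_lt_of_le (degLT_mul_aux a' t d ha'0 (mem_degreeLT.mp ht)) ?_
        exact_mod_cast (by omega : a'.natDegree + d ≤ i)
    have hPμ : P (μ₀ t) = -(b' * t) := by
      ext i
      by_cases hi : i < L₂
      · rw [show i = ((⟨i, hi⟩ : Fin L₂) : ℕ) from rfl, hPcoeff, hμ₀]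
        simp only [Fin.coe_natAdd]
        rw [if_neg (by omega), coeff_neg]
        congr 1
        simp
      · rw [hPhigh _ _ (le_of_not_gt hi), coeff_neg]
        rw [show (b' * t).coeff i = 0 from coeff_eq_zero_of_degree_lt ?_, neg_zero]
        refine lt_of_lt_of_le (degLT_mul_aux b' t d hb'0 (mem_degreeLT.mp ht)) ?_
        exact_mod_cast (by omega : b'.natDegree + d ≤ i)
    rw [hQμ, hPμ, ha', hb']
    ring
  have hkd : Module.finrank ℂ (LinearMap.ker S.mulVecLin) = d := by
    let μ : degreeLT ℂ d →ₗ[ℂ] LinearMap.ker S.mulVecLin :=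
      LinearMap.codRestrict _ (μ₀ ∘ₗ (degreeLT ℂ d).subtype) (fun t => hμmem t t.2)
    have hinj : Function.Injective μ := by
      rw [← LinearMap.ker_eq_bot, LinearMap.ker_eq_bot']
      intro t htz
      have h0 : μ₀ (t : Polynomial ℂ) = 0 := congrArg Subtype.val htz
      have hat : a' * (t : Polynomial ℂ) = 0 := by
        ext i
        rw [coeff_zero]
        by_cases hi : i < L₁
        · have h1 := congrFun h0 ⟨i, lt_of_lt_of_le hi (Nat.le_add_right _ _)⟩
          rw [hμ₀] at h1
          simpa [hi] using h1
        · refine coeff_eq_zero_of_degree_lt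
            (lt_of_lt_of_le (degLT_mul_aux a' t d ha'0 (mem_degreeLT.mp t.2)) ?_)
          exact_mod_cast (by omega : a'.natDegree + d ≤ i)
      rcases mul_eq_zero.mp hat with h | h
      · exact absurd h ha'0
      · exact Subtype.ext h
    have hsurj : Function.Surjective μ := by
      rintro ⟨x, hx⟩
      rw [hker] at hx
      have h0 : Φ x = 0 := hx
      rw [hΦ] at h0
      have h0' : b' * Q x + a' * P x = 0 := by
        apply mul_left_cancel₀ hg0
        rw [mul_zero]
        linear_combination h0 - Q x * hb' - P x * ha'
      have hdvd : a' ∣ Q x := by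
        have hd2 : a' ∣ b' * Q x := ⟨-(P x), by linear_combination h0'⟩
        exact hcop.dvd_of_dvd_mul_left hd2
      obtain ⟨t, htq⟩ := hdvd
      rw [htq] at h0'
      have hpt : P x = -(b' * t) := by
        apply mul_left_cancel₀ ha'0
        linear_combination h0'
      have htd : t ∈ degreeLT ℂ d := by
        rw [mem_degreeLT]
        rcases eq_or_ne t 0 with rfl | ht0
        · rw [degree_zero]; exact WithBot.bot_lt_coe _
        · have hq0 : Q x ≠ 0 := by rw [htq]; exact mul_ne_zero ha'0 ht0
          have hlt : (Q x).natDegree < L₁ := by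
            have h3 := mem_degreeLT.mp (hQmem x)
            rwa [degree_eq_natDegree hq0, Nat.cast_lt] at h3
          rw [htq, natDegree_mul ha'0 ht0] at hlt
          rw [degree_eq_natDegree ht0]
          exact_mod_cast (by omega : t.natDegree < d)
      refine ⟨⟨t, htd⟩, Subtype.ext ?_⟩
      show μ₀ t = x
      funext c
      rw [hμ₀]
      by_cases hc : (c : ℕ) < L₁
      · rw [if_pos hc, ← htq]
        have h4 := hQcoeff x ⟨(c : ℕ), hc⟩
        rwa [show Fin.castAdd L₂ ⟨(c : ℕ), hc⟩ = c from Fin.ext rfl] at h4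
      · rw [if_neg hc]
        have hc2 : (c : ℕ) - L₁ < L₂ := by have := c.isLt; omega
        have h4 := hPcoeff x ⟨(c : ℕ) - L₁, hc2⟩
        rw [show Fin.natAdd L₁ ⟨(c : ℕ) - L₁, hc2⟩ = c from Fin.ext (by
          simp only [Fin.coe_natAdd]; omega)] at h4
        rw [hpt, coeff_neg] at h4
        exact h4
    have he := LinearEquiv.finrank_eq (LinearEquiv.ofBijective μ ⟨hinj, hsurj⟩)
    rw [← he, LinearEquiv.finrank_eq (degreeLTEquiv ℂ d), Module.finrank_fin_fun]
  have hfr := LinearMap.finrank_range_add_finrank_ker S.mulVecLin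
  rw [Module.finrank_fin_fun, hkd] at hfr
  rw [hrk]
  omega
end
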